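/- arXiv:1404.3660 — 3 statements merged into one kernel-verified Lean document; each statement's English description precedes it below -/
import Mathlib

section
/- (Observation 1) Let (G, v0, c, d, W) be a CARP instance on the complete graph on a finite vertex set V. Every feasible solution (𝒞, s) for the instance (G, v0, c^▽, d, W) of c^▽-cost w is also a feasible solution for the instance (G, v0, c^▼, d, W), and its c^▼-cost is at most w − r. -/
/-!
On a walk of the complete graph every traversed edge `{u, v}` has `u ≠ v`, so the one-edge walk
gives `dist_c(u, v) ≤ c(u, v)`; hence `c^▼ ≤ c^▽` on every traversal and `c^▽ - c^▼ ≥ 0`.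
The cost saved by passing from `c^▽` to `c^▼` is the `(c^▽ - c^▼)`-cost of the solution, which
is at least the sum of `c^▽ - c^▼` over the served edges (each walk traverses the edges it serves),
and the served sets partition the positive-demand edges, which contain `R`.
-/

noncomputable section

/-- Cost of a walk: sum of edge costs over its edge traversals,
counted with multiplicity. -/
def walkCost {V : Type*} {G : SimpleGraph V} (γ : Sym2 V → ℝ)
    {u v : V} (p : G.Walk u v) : ℝ :=
  (p.edges.map γ).sum

/-- Minimum `c`-cost of a walk from `u` to `v` in `G`
(`graphDist G c u u = 0` via the trivial walk). -/
def graphDist {V : Type*} (G : SimpleGraph V) (c : Sym2 V → ℝ) (u v : V) : ℝ :=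
  sInf {x : ℝ | ∃ p : G.Walk u v, walkCost c p = x}

/-- A feasible CARP solution on the complete graph on `V` with depot `v0`,
demand function `d` and capacity `W`: a finite family of closed walks, each
through the depot, together with a serving function assigning to each walk a
set of (positive-demand) edges it traverses, of total demand at most `W`,
such that every positive-demand edge is served by exactly one walk.
(Feasibility does not depend on the edge costs.) -/
structure CARPSol (V : Type*) (v0 : V) (d : Sym2 V → ℝ) (W : ℝ) where
  n : ℕ
  walk : Fin n → (⊤ : SimpleGraph V).Walk v0 v0
  serve : Fin n → Finset (Sym2 V)
  serve_subset : ∀ i, ∀ e ∈ serve i, e ∈ (walk i).edges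
  serve_pos : ∀ i, ∀ e ∈ serve i, 0 < d e
  serve_cap : ∀ i, ∑ e ∈ serve i, d e ≤ W
  serve_unique : ∀ e : Sym2 V, 0 < d e → ∃! i, e ∈ serve i

/-- Cost of a CARP solution with respect to an edge-cost function `γ`:
the sum over its walks of their traversal costs. -/
def solCost {V : Type*} {v0 : V} {d : Sym2 V → ℝ} {W : ℝ}
    (γ : Sym2 V → ℝ) (sol : CARPSol V v0 d W) : ℝ :=
  ∑ i, walkCost γ (sol.walk i)

end

theorem Finset.sum_le_sum_map_of_forall_mem {α M : Type*} [AddCommMonoid M] [PartialOrder M]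
    [IsOrderedAddMonoid M] {s : Finset α} {l : List α} {f : α → M}
    (hs : ∀ x ∈ s, x ∈ l) (hf : ∀ x ∈ l, 0 ≤ f x) : ∑ x ∈ s, f x ≤ (l.map f).sum := by
  classical
  calc ∑ x ∈ s, f x ≤ ∑ x ∈ l.toFinset, f x :=
        sum_le_sum_of_subset_of_nonneg (fun x hx => List.mem_toFinset.2 (hs x hx))
          fun x hx _ => hf x (List.mem_toFinset.1 hx)
    _ = (l.dedup.map f).sum := rfl
    _ ≤ (l.map f).sum := ((l.dedup_sublist.map f).sum_le_sum (by simpa using hf))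

section Walks

variable {V : Type*} {G : SimpleGraph V} {u v : V}

theorem walkCost_sub (γ δ : Sym2 V → ℝ) (p : G.Walk u v) :
    walkCost (γ - δ) p = walkCost γ p - walkCost δ p := by
  simpa [walkCost, Pi.sub_def] using
    Multiset.sum_map_sub (m := (p.edges : Multiset (Sym2 V))) (f := γ) (g := δ)

theorem graphDist_le_walkCost {c : Sym2 V → ℝ} (hc : ∀ e, 0 ≤ c e) (p : G.Walk u v) :
    graphDist G c u v ≤ walkCost c p :=
  csInf_le ⟨0, by rintro _ ⟨q, rfl⟩; exact List.sum_nonneg (by simpa using fun e _ => hc e)⟩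
    ⟨p, rfl⟩

theorem graphDist_le_of_adj {c : Sym2 V → ℝ} (hc : ∀ e, 0 ≤ c e) (h : G.Adj u v) :
    graphDist G c u v ≤ c s(u, v) := by
  simpa [walkCost] using graphDist_le_walkCost hc h.toWalk

end Walks

namespace CARPSol

variable {V : Type*} {v0 : V} {d : Sym2 V → ℝ} {W : ℝ} (sol : CARPSol V v0 d W)

theorem solCost_sub (γ δ : Sym2 V → ℝ) :
    solCost (γ - δ) sol = solCost γ sol - solCost δ sol := by
  simp only [solCost, walkCost_sub, Finset.sum_sub_distrib]

theorem pairwiseDisjoint_serve : (Set.univ : Set (Fin sol.n)).PairwiseDisjoint sol.serve :=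
  fun i _ _ _ hij => Finset.disjoint_left.2 fun e hi hj =>
    hij ((sol.serve_unique e (sol.serve_pos i e hi)).unique hi hj)

theorem sum_le_solCost {f : Sym2 V → ℝ} (hf : ∀ i, ∀ e ∈ (sol.walk i).edges, 0 ≤ f e)
    {S : Finset (Sym2 V)} (hS : ∀ e ∈ S, 0 < d e) : ∑ e ∈ S, f e ≤ solCost f sol := by
  classical
  have hS_sub : S ⊆ Finset.univ.biUnion sol.serve := fun e he => by
    obtain ⟨i, hi, -⟩ := sol.serve_unique e (hS e he)
    exact Finset.mem_biUnion.2 ⟨i, Finset.mem_univ i, hi⟩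
  calc ∑ e ∈ S, f e ≤ ∑ e ∈ Finset.univ.biUnion sol.serve, f e := by
        refine Finset.sum_le_sum_of_subset_of_nonneg hS_sub fun e he _ => ?_
        obtain ⟨i, -, hi⟩ := Finset.mem_biUnion.1 he
        exact hf i e (sol.serve_subset i e hi)
    _ = ∑ i, ∑ e ∈ sol.serve i, f e := by
        rw [Finset.sum_biUnion (by simpa using sol.pairwiseDisjoint_serve)]
    _ ≤ solCost f sol :=
        Finset.sum_le_sum fun i _ =>
          Finset.sum_le_sum_map_of_forall_mem (sol.serve_subset i) (hf i)

end CARPSol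

theorem solCost_cBlackDown_le_general {V : Type*} [Fintype V] (v0 : V)
    (c d : Sym2 V → ℝ) (W : ℝ)
    (hc : ∀ e, 0 ≤ c e)
    (cDn cBk : Sym2 V → ℝ)
    (hDn : ∀ u v : V, cDn s(u, v) =
      if 0 < d s(u, v) then c s(u, v) else graphDist (⊤ : SimpleGraph V) c u v)
    (hBk : ∀ u v : V, cBk s(u, v) = graphDist (⊤ : SimpleGraph V) c u v)
    (sol : CARPSol V v0 d W) (w : ℝ) (hw : solCost cDn sol = w) :
    solCost cBk sol ≤
      w - ∑ e ∈ Finset.univ.filter (fun e : Sym2 V => 0 < d e ∧ cDn e ≠ cBk e),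
        (cDn e - cBk e) := by
  have hgap_nonneg : ∀ i, ∀ e ∈ (sol.walk i).edges, 0 ≤ (cDn - cBk) e := by
    intro i e he
    induction e using Sym2.ind with
    | _ u v =>
      have hdist := graphDist_le_of_adj hc ((sol.walk i).adj_of_mem_edges he)
      simp only [Pi.sub_apply, hDn, hBk]
      split_ifs <;> linarith
  have hR := sol.sum_le_solCost hgap_nonneg
    (S := Finset.univ.filter fun e => 0 < d e ∧ cDn e ≠ cBk e)
    fun e he => (Finset.mem_filter.1 he).2.1
  calc solCost cBk sol = solCost cDn sol - solCost (cDn - cBk) sol := by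
        rw [sol.solCost_sub, sub_sub_cancel]
    _ ≤ _ := by rw [hw]; exact sub_le_sub_left hR w

/-- Observation 1: any feasible solution to the instance with
costs `c▽` of cost `w` is also feasible for the instance with costs `c▼`
(feasibility does not depend on the costs) and has `c▼`-cost at most `w - r`,
where `R` is the set of positive-demand edges on which `c▽` and `c▼` differ
and `r = Σ_{e ∈ R} (c▽(e) - c▼(e))`. -/
theorem solCost_cBlackDown_le {V : Type*} [Fintype V] [DecidableEq V] (v0 : V)
    (c d : Sym2 V → ℝ) (W : ℝ)
    (hc : ∀ e, 0 ≤ c e) (hd : ∀ e, 0 ≤ d e) (hW : 0 ≤ W)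
    (cDn cBk : Sym2 V → ℝ)
    (hDn : ∀ u v : V, cDn s(u, v) =
      if 0 < d s(u, v) then c s(u, v) else graphDist (⊤ : SimpleGraph V) c u v)
    (hBk : ∀ u v : V, cBk s(u, v) = graphDist (⊤ : SimpleGraph V) c u v)
    (sol : CARPSol V v0 d W) (w : ℝ) (hw : solCost cDn sol = w) :
    solCost cBk sol ≤
      w - ∑ e ∈ Finset.univ.filter (fun e : Sym2 V => 0 < d e ∧ cDn e ≠ cBk e),
        (cDn e - cBk e) :=
  solCost_cBlackDown_le_general v0 c d W hc cDn cBk hDn hBk sol w hw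
end

section
/- Let G = (V,E) be the complete graph on a finite vertex set with nonnegative edge costs c and demands d, and let C be a closed walk in G starting and ending at a vertex v0. Then there exists a closed walk C' in G starting and ending at v0 such that (a) every edge with positive demand is traversed by C' at least as many times as by C, and (b) the c-cost of C' equals the c^▽-cost of C. -/
/-!
Keep every traversal of a positive-demand edge and replace every traversal of a zero-demand
edge `{a, b}` by a cheapest `a`–`b` walk. Such a walk exists because `V` is finite: a walk is
never cheaper than the path obtained by shortcutting it, and there are only finitely many paths.
Each replacement costs exactly `c^▽` of the edge it replaces.
-/

open SimpleGraph

section WalkCost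

variable {V : Type*} {G : SimpleGraph V}

@[simp]
lemma walkCost_nil (γ : Sym2 V → ℝ) {u : V} : walkCost γ (Walk.nil : G.Walk u u) = 0 := rfl

@[simp]
lemma walkCost_cons (γ : Sym2 V → ℝ) {u v w : V} (h : G.Adj u v) (p : G.Walk v w) :
    walkCost γ (Walk.cons h p) = γ s(u, v) + walkCost γ p := by
  simp [walkCost]

@[simp]
lemma walkCost_append (γ : Sym2 V → ℝ) {u v w : V} (p : G.Walk u v) (q : G.Walk v w) :
    walkCost γ (p.append q) = walkCost γ p + walkCost γ q := by
  simp [walkCost]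

lemma walkCost_bypass_le [DecidableEq V] {γ : Sym2 V → ℝ} (hγ : ∀ e, 0 ≤ γ e) {u v : V}
    (p : G.Walk u v) : walkCost γ p.bypass ≤ walkCost γ p := by
  obtain ⟨l, hperm, hsub⟩ :=
    List.subperm_of_subset p.bypass_isPath.edges_nodup p.edges_bypass_subset_edges
  calc walkCost γ p.bypass = (l.map γ).sum := (hperm.map γ).sum_eq.symm
    _ ≤ (p.edges.map γ).sum := (hsub.map γ).sum_le_sum (by simpa using fun e _ ↦ hγ e)

lemma exists_walkCost_eq_graphDist [Fintype V] [DecidableEq V] [DecidableRel G.Adj]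
    {c : Sym2 V → ℝ} (hc : ∀ e, 0 ≤ c e) {u v : V} (huv : G.Reachable u v) :
    ∃ p : G.Walk u v, walkCost c p = graphDist G c u v := by
  have : Nonempty (G.Path u v) := ⟨huv.some.toPath⟩
  obtain ⟨q, -, hq⟩ := Finset.exists_min_image Finset.univ (fun q : G.Path u v ↦ walkCost c q.1)
    Finset.univ_nonempty
  refine ⟨q.1, Eq.symm <| IsLeast.csInf_eq ⟨⟨q.1, rfl⟩, ?_⟩⟩
  rintro _ ⟨p, rfl⟩
  exact (hq p.toPath (Finset.mem_univ _)).trans (walkCost_bypass_le hc p)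

end WalkCost

lemma exists_walk_count_le_walkCost_eq_cDown {V : Type*} [Fintype V] [DecidableEq V]
    {c d cDn : Sym2 V → ℝ} (hc : ∀ e, 0 ≤ c e)
    (hDn : ∀ u v : V, cDn s(u, v) =
      if 0 < d s(u, v) then c s(u, v) else graphDist (⊤ : SimpleGraph V) c u v)
    {u w : V} (C : (⊤ : SimpleGraph V).Walk u w) :
    ∃ C' : (⊤ : SimpleGraph V).Walk u w,
      (∀ e : Sym2 V, 0 < d e → C.edges.count e ≤ C'.edges.count e) ∧
      walkCost c C' = walkCost cDn C := by
  induction C with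
  | nil => exact ⟨Walk.nil, by simp, by simp⟩
  | @cons a b _ hab p ih =>
    obtain ⟨p', hcount, hcost⟩ := ih
    by_cases hpos : 0 < d s(a, b)
    · refine ⟨Walk.cons hab p', fun e he ↦ ?_, by simp [hDn, hpos, hcost]⟩
      simpa [List.count_cons] using hcount e he
    · obtain ⟨q, hq⟩ := exists_walkCost_eq_graphDist hc (reachable_top (u := a) (v := b))
      refine ⟨q.append p', fun e he ↦ ?_, by simp [hDn, hpos, hq, hcost]⟩
      have hne : s(a, b) ≠ e := fun h ↦ hpos (h ▸ he)
      simp only [Walk.edges_cons, Walk.edges_append, List.count_cons, List.count_append,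
        beq_iff_eq, hne, if_false, add_zero]
      exact (hcount e he).trans (Nat.le_add_left _ _)

theorem exists_walk_cost_cDown_general {V : Type*} [Fintype V] [DecidableEq V]
    (v0 : V) (c d : Sym2 V → ℝ)
    (hc : ∀ e, 0 ≤ c e)
    (cDn : Sym2 V → ℝ)
    (hDn : ∀ u v : V, cDn s(u, v) =
      if 0 < d s(u, v) then c s(u, v) else graphDist (⊤ : SimpleGraph V) c u v)
    (C : (⊤ : SimpleGraph V).Walk v0 v0) :
    ∃ C' : (⊤ : SimpleGraph V).Walk v0 v0,
      (∀ e : Sym2 V, 0 < d e → C.edges.count e ≤ C'.edges.count e) ∧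
      walkCost c C' = walkCost cDn C :=
  exists_walk_count_le_walkCost_eq_cDown hc hDn C

/-- for any closed walk `C` through `v0` in the complete graph
there is a closed walk `C'` through `v0` that traverses every positive-demand
edge at least as often as `C` does and whose `c`-cost equals the `c▽`-cost
of `C`. -/
theorem exists_walk_cost_cDown {V : Type*} [Fintype V] [DecidableEq V]
    (v0 : V) (c d : Sym2 V → ℝ)
    (hc : ∀ e, 0 ≤ c e) (hd : ∀ e, 0 ≤ d e)
    (cDn : Sym2 V → ℝ)
    (hDn : ∀ u v : V, cDn s(u, v) =
      if 0 < d s(u, v) then c s(u, v) else graphDist (⊤ : SimpleGraph V) c u v)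
    (C : (⊤ : SimpleGraph V).Walk v0 v0) :
    ∃ C' : (⊤ : SimpleGraph V).Walk v0 v0,
      (∀ e : Sym2 V, 0 < d e → C.edges.count e ≤ C'.edges.count e) ∧
      walkCost c C' = walkCost cDn C :=
  exists_walk_cost_cDown_general v0 c d hc cDn hDn C
end

section
/- Let ℓ ≥ 0 and consider the CARP instance with vertex set {1, 1', 2, 2', 3, 3', 4, 4'}, depot vertex 1, capacity W = 4, edges {i, i'} for i ∈ {1,2,3,4} of cost 0 and demand 1, edges between every copy of i and every copy of j of cost 1 and demand 0 for each pair {i,j} ∈ {{1,4}, {3,4}, {2,3}}, and edges between every copy of i and every copy of j of cost ℓ and demand 0 for each pair {i,j} ∈ {{1,2}, {1,3}, {2,4}} (a copy of i means i or i'). This instance admits a feasible solution consisting of a single closed walk through the depot of total cost 6, serving all four positive-demand edges; in particular the optimal cost of this CARP instance is at most 6, independently of ℓ. -/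
noncomputable section

/-- Vertex set of the split-vertex instance: two copies `(i,0)` and `(i,1)`
of each TSP vertex `i ∈ {1,2,3,4}` (represented by `Fin 4`). -/
abbrev SplitV : Type := Fin 4 × Fin 2

/-- Demands of the split-vertex instance: the split edges `{(i,0),(i,1)}`
have demand `1`, all other edges have demand `0`. -/
def dSplit : Sym2 SplitV → ℝ :=
  fun e => if ∃ i : Fin 4, e = s((i, 0), (i, 1)) then 1 else 0

/-- Costs of the split-vertex instance (for the TSP costs of Statement 11,
with TSP vertices `1,2,3,4` represented by `0,1,2,3 : Fin 4`): split edges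
`{(i,a),(i,b)}` cost `0`; edges between copies of `i` and `j` cost `1` for
`{i,j} ∈ {{1,4},{3,4},{2,3}}` and cost `ℓ` for
`{i,j} ∈ {{1,2},{1,3},{2,4}}`. -/
def cSplit (ℓ : ℝ) : Sym2 SplitV → ℝ :=
  fun e =>
    if ∃ (i : Fin 4) (a b : Fin 2), e = s((i, a), (i, b)) then 0
    else if ∃ a b : Fin 2,
        e = s(((0 : Fin 4), a), ((3 : Fin 4), b)) ∨
        e = s(((2 : Fin 4), a), ((3 : Fin 4), b)) ∨
        e = s(((1 : Fin 4), a), ((2 : Fin 4), b)) then 1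
    else ℓ

end

/-!
The closed walk 1 → 1' → 4 → 4' → 3 → 3' → 2 → 2' → 3 → 4 → 1 traverses all four split edges
(cost 0) and otherwise only six edges of cost 1, never one of cost `ℓ`; served by this single
walk, the four unit demands exactly fill the capacity 4. Since all costs are nonnegative when
`ℓ ≥ 0`, the set of solution costs is bounded below, so its infimum is at most 6.
-/

namespace CARPSol

variable {V : Type*} {v0 : V} {d : Sym2 V → ℝ} {W : ℝ}

def ofWalk (p : (⊤ : SimpleGraph V).Walk v0 v0) (S : Finset (Sym2 V))
    (hS : ∀ e ∈ S, e ∈ p.edges) (hd : ∀ e, 0 < d e ↔ e ∈ S) (hW : ∑ e ∈ S, d e ≤ W) :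
    CARPSol V v0 d W where
  n := 1
  walk _ := p
  serve _ := S
  serve_subset _ := hS
  serve_pos _ e he := (hd e).2 he
  serve_cap _ := hW
  serve_unique e he := ⟨0, (hd e).1 he, fun i _ => Subsingleton.elim i 0⟩

theorem solCost_ofWalk (γ : Sym2 V → ℝ) (p : (⊤ : SimpleGraph V).Walk v0 v0)
    (S : Finset (Sym2 V)) (hS : ∀ e ∈ S, e ∈ p.edges) (hd : ∀ e, 0 < d e ↔ e ∈ S)
    (hW : ∑ e ∈ S, d e ≤ W) :
    solCost γ (ofWalk p S hS hd hW) = walkCost γ p :=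
  Fin.sum_univ_one _

end CARPSol

theorem walkCost_nonneg {V : Type*} {G : SimpleGraph V} {γ : Sym2 V → ℝ}
    (hγ : ∀ e, 0 ≤ γ e) {u v : V} (p : G.Walk u v) : 0 ≤ walkCost γ p :=
  List.sum_nonneg fun _ hx => by
    obtain ⟨e, _, rfl⟩ := List.mem_map.mp hx
    exact hγ e

theorem solCost_nonneg {V : Type*} {v0 : V} {d : Sym2 V → ℝ} {W : ℝ} {γ : Sym2 V → ℝ}
    (hγ : ∀ e, 0 ≤ γ e) (sol : CARPSol V v0 d W) : 0 ≤ solCost γ sol :=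
  Finset.sum_nonneg fun i _ => walkCost_nonneg hγ (sol.walk i)

theorem sInf_solCost_le {V : Type*} {v0 : V} {d : Sym2 V → ℝ} {W : ℝ} {γ : Sym2 V → ℝ}
    (hγ : ∀ e, 0 ≤ γ e) (sol : CARPSol V v0 d W) :
    sInf {x : ℝ | ∃ sol : CARPSol V v0 d W, solCost γ sol = x} ≤ solCost γ sol :=
  csInf_le ⟨0, by rintro _ ⟨sol', rfl⟩; exact solCost_nonneg hγ sol'⟩ ⟨sol, rfl⟩

theorem cSplit_nonneg {ℓ : ℝ} (hℓ : 0 ≤ ℓ) (e : Sym2 SplitV) : 0 ≤ cSplit ℓ e := by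
  unfold cSplit
  split_ifs <;> first | exact le_rfl | exact zero_le_one | exact hℓ

def splitEdges : Finset (Sym2 SplitV) :=
  Finset.univ.image fun i : Fin 4 => s((i, 0), (i, 1))

theorem dSplit_pos_iff (e : Sym2 SplitV) : 0 < dSplit e ↔ e ∈ splitEdges := by
  unfold dSplit splitEdges
  split_ifs with h <;> simp [h, eq_comm]

theorem sum_dSplit_splitEdges : ∑ e ∈ splitEdges, dSplit e = 4 := by
  rw [splitEdges, Finset.sum_image (by decide)]
  simp [dSplit]

-- Paper vertex `i` is `i - 1 : Fin 4`, and `i'` is the copy with second coordinate `1`.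
def splitTour : (⊤ : SimpleGraph SplitV).Walk (0, 0) (0, 0) :=
  .cons (v := (0, 1)) (by decide) <| .cons (v := (3, 0)) (by decide) <|
  .cons (v := (3, 1)) (by decide) <| .cons (v := (2, 0)) (by decide) <|
  .cons (v := (2, 1)) (by decide) <| .cons (v := (1, 0)) (by decide) <|
  .cons (v := (1, 1)) (by decide) <| .cons (v := (2, 0)) (by decide) <|
  .cons (v := (3, 0)) (by decide) <| .cons (by decide) .nil

theorem splitEdges_subset_edges_splitTour : ∀ e ∈ splitEdges, e ∈ splitTour.edges := by
  decide

theorem walkCost_splitTour (ℓ : ℝ) : walkCost (cSplit ℓ) splitTour = 6 := by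
  simp +decide [walkCost, splitTour, cSplit]
  norm_num

def splitSol : CARPSol SplitV ((0 : Fin 4), (0 : Fin 2)) dSplit 4 :=
  .ofWalk splitTour splitEdges splitEdges_subset_edges_splitTour dSplit_pos_iff
    sum_dSplit_splitEdges.le

/-- for every `ℓ ≥ 0`, the split-vertex CARP instance with
depot `(1,0)` (represented by `(0,0)`) and capacity `W = 4` admits a feasible
solution consisting of a single closed walk through the depot of total cost
`6`; in particular its optimal cost is at most `6`, independently of `ℓ`. -/
theorem split_instance_cost_six (ℓ : ℝ) (hℓ : 0 ≤ ℓ) :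
    (∃ sol : CARPSol SplitV ((0 : Fin 4), (0 : Fin 2)) dSplit 4,
      sol.n = 1 ∧ solCost (cSplit ℓ) sol = 6) ∧
    sInf {x : ℝ | ∃ sol : CARPSol SplitV ((0 : Fin 4), (0 : Fin 2)) dSplit 4,
      solCost (cSplit ℓ) sol = x} ≤ 6 := by
  have hcost : solCost (cSplit ℓ) splitSol = 6 := by
    rw [splitSol, CARPSol.solCost_ofWalk, walkCost_splitTour]
  exact ⟨⟨splitSol, rfl, hcost⟩, hcost ▸ sInf_solCost_le (cSplit_nonneg hℓ) splitSol⟩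
end
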